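/- Let p be a prime and M a finitely generated torsion module over Λ = Z_p[[T]]. If the coinvariants M/(T·M) form a finite group, then the invariants M[T] = {m ∈ M : T·m = 0} also form a finite group, and conversely. -/

import Mathlib

/-!
Since `M` is Noetherian, `K = ker X^N` is the generalized kernel of `X` for large `N`, and
`K ∩ X^N M = 0`. If `M/XM` is finite, so is `M/X^N M`, into which `K ⊇ M[X]` injects. If `M[X]` is
finite, so is `K = ker X^N`, and it remains to see that `M/(K + XM)` is finite. A nonzerodivisor
`F = X^n G` with `G(0) ≠ 0` kills `M`, so `G` kills `M/(K + XM)`; as `X` does too, so does the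
constant `G(0) ∈ ℤ_p \ {0}`. Hence `M/(K + XM)` is a finitely generated module over the finite
ring `Λ/(X, p^k) = ℤ/p^k`.
-/

open LinearMap PowerSeries

section Finiteness

variable {R A B C : Type*} [Ring R] [AddCommGroup A] [Module R A] [AddCommGroup B] [Module R B]
  [AddCommGroup C] [Module R C]

theorem Submodule.finite_of_finite_quotient (S : Submodule R A) [Finite S] [Finite (A ⧸ S)] :
    Finite A :=
  have : Finite (A ⧸ S.toAddSubgroup) := ‹Finite (A ⧸ S)›
  have : Finite S.toAddSubgroup := ‹Finite S›
  .of_equiv _ (AddSubgroup.addGroupEquivQuotientProdAddSubgroup (s := S.toAddSubgroup)).symm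

theorem LinearMap.finite_of_finite_ker_of_finite_range (g : A →ₗ[R] B) [Finite (ker g)]
    [Finite (range g)] : Finite A :=
  have : Finite (A ⧸ ker g) := .of_equiv _ g.quotKerEquivRange.symm.toEquiv
  (ker g).finite_of_finite_quotient

theorem Submodule.finite_map (f : A →ₗ[R] B) (S : Submodule R A) [Finite S] : Finite (S.map f) :=
  .of_surjective _ (f.submoduleMap_surjective S)

theorem Submodule.finite_of_disjoint {S P : Submodule R A} (h : Disjoint S P) [Finite (A ⧸ P)] :
    Finite S :=
  Finite.of_injective (P.mkQ.domRestrict S) <| by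
    refine (injective_iff_map_eq_zero _).2 fun x hx ↦ Subtype.ext ?_
    exact Submodule.disjoint_def.1 h x x.2 ((Submodule.Quotient.mk_eq_zero P).1 hx)

theorem Submodule.finite_quotient_of_finite_quotient_sup {S P : Submodule R A} [Finite S]
    [Finite (A ⧸ (S ⊔ P))] : Finite (A ⧸ P) :=
  have : Finite ((A ⧸ P) ⧸ (S ⊔ P).map P.mkQ) :=
    .of_equiv _ (P.quotientQuotientEquivQuotient _ le_sup_right).symm.toEquiv
  have : Finite ((S ⊔ P).map P.mkQ) := by
    rw [Submodule.map_sup, Submodule.mkQ_map_self, sup_bot_eq]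
    exact S.finite_map P.mkQ
  ((S ⊔ P).map P.mkQ).finite_of_finite_quotient

theorem LinearMap.finite_ker_comp (g : B →ₗ[R] C) (h : A →ₗ[R] B) [Finite (ker g)]
    [Finite (ker h)] : Finite (ker (g ∘ₗ h)) := by
  have hmaps : ∀ x ∈ ker (g ∘ₗ h), h x ∈ ker g := fun x hx ↦ hx
  have : Finite (ker (h.restrict hmaps)) := by
    rw [LinearMap.ker_restrict]
    exact .of_injective (fun x ↦ (⟨x.1.1, x.2⟩ : ker h)) fun x y hxy ↦ by
      simpa using congrArg Subtype.val hxy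
  exact (h.restrict hmaps).finite_of_finite_ker_of_finite_range

theorem LinearMap.finite_coker_comp (g : B →ₗ[R] C) (h : A →ₗ[R] B) [Finite (C ⧸ range g)]
    [Finite (B ⧸ range h)] : Finite (C ⧸ range (g ∘ₗ h)) := by
  have hle : range (g ∘ₗ h) ≤ range g := range_comp_le_range h g
  have : Finite ((range g).map (range (g ∘ₗ h)).mkQ) := by
    have hker : range h ≤ ker ((range (g ∘ₗ h)).mkQ ∘ₗ g) := by
      rintro _ ⟨x, rfl⟩
      simp
    rw [← range_comp, ← Submodule.range_liftQ _ _ hker]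
    exact .of_surjective _ (LinearMap.surjective_rangeRestrict _)
  have : Finite ((C ⧸ range (g ∘ₗ h)) ⧸ (range g).map (range (g ∘ₗ h)).mkQ) :=
    .of_equiv _ ((range (g ∘ₗ h)).quotientQuotientEquivQuotient _ hle).symm.toEquiv
  exact ((range g).map (range (g ∘ₗ h)).mkQ).finite_of_finite_quotient

theorem Module.End.finite_ker_pow (f : Module.End R A) [Finite (ker f)] :
    ∀ n : ℕ, Finite (ker (f ^ n))
  | 0 => by rw [pow_zero, Module.End.one_eq_id, ker_id]; infer_instance
  | n + 1 => by
    have := f.finite_ker_pow n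
    rw [pow_succ, Module.End.mul_eq_comp]
    exact finite_ker_comp _ _

theorem Module.End.finite_coker_pow (f : Module.End R A) [Finite (A ⧸ range f)] :
    ∀ n : ℕ, Finite (A ⧸ range (f ^ n))
  | 0 => by rw [pow_zero, Module.End.one_eq_id, range_id]; infer_instance
  | n + 1 => by
    have := f.finite_coker_pow n
    rw [pow_succ, Module.End.mul_eq_comp]
    exact finite_coker_comp _ _

end Finiteness

theorem Module.finite_of_isTorsionBySet {R N : Type*} [CommRing R] [AddCommGroup N] [Module R N]
    [Module.Finite R N] (I : Ideal R) [Finite (R ⧸ I)] (hI : Module.IsTorsionBySet R N I) :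
    Finite N :=
  letI := hI.module
  have : Module.Finite (R ⧸ I) N := Module.Finite.of_restrictScalars_finite R _ _
  Module.finite_of_finite (R ⧸ I)

theorem PowerSeries.smul_eq_C_constantCoeff_smul {R N : Type*} [CommRing R] [AddCommGroup N]
    [Module R⟦X⟧ N] {x : N} (hx : (X : R⟦X⟧) • x = 0) (f : R⟦X⟧) :
    f • x = C (constantCoeff f) • x := by
  obtain ⟨g, hg⟩ := X_dvd_iff.mpr (show constantCoeff (f - C (constantCoeff f)) = 0 by simp)
  rw [sub_eq_iff_eq_add, mul_comm] at hg
  conv_lhs => rw [hg, add_smul, mul_smul, hx, smul_zero, zero_add]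

theorem LinearMap.lsmul_pow {R M : Type*} [CommSemiring R] [AddCommMonoid M] [Module R M]
    (r : R) (n : ℕ) : lsmul R M r ^ n = lsmul R M (r ^ n) :=
  (map_pow (Algebra.lsmul R R M) r n).symm

section Iwasawa

variable {p : ℕ} [Fact p.Prime]

theorem PadicInt.dvd_of_toZModPow_valuation_eq_zero {c z : ℤ_[p]} (hc : c ≠ 0)
    (hz : toZModPow c.valuation z = 0) : c ∣ z := by
  have hpow : (p : ℤ_[p]) ^ c.valuation ∣ z := by
    rw [← Ideal.mem_span_singleton, ← ker_toZModPow]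
    exact hz
  have hassoc : Associated ((p : ℤ_[p]) ^ c.valuation) c :=
    ⟨unitCoeff hc, by rw [mul_comm]; exact (unitCoeff_spec hc).symm⟩
  exact hassoc.symm.dvd.trans hpow

theorem PowerSeries.finite_of_X_smul_eq_zero {N : Type*} [AddCommGroup N] [Module ℤ_[p]⟦X⟧ N]
    [Module.Finite ℤ_[p]⟦X⟧ N] {c : ℤ_[p]} (hc : c ≠ 0) (hX : ∀ x : N, (X : ℤ_[p]⟦X⟧) • x = 0)
    (hcx : ∀ x : N, C c • x = 0) : Finite N := by
  set ρ := (PadicInt.toZModPow c.valuation).comp (constantCoeff (R := ℤ_[p]))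
  have : Finite (ℤ_[p]⟦X⟧ ⧸ RingHom.ker ρ) :=
    .of_equiv _ (RingHom.quotientKerEquivOfSurjective (ZMod.ringHom_surjective ρ)).symm.toEquiv
  refine Module.finite_of_isTorsionBySet (RingHom.ker ρ) ?_
  rintro x ⟨f, hf⟩
  obtain ⟨d, hd⟩ := PadicInt.dvd_of_toZModPow_valuation_eq_zero hc hf
  rw [smul_eq_C_constantCoeff_smul (hX x), hd, map_mul, mul_comm, mul_smul, hcx, smul_zero]

theorem PowerSeries.finite_quotient_ker_X_pow_sup_range_X {M : Type*} [AddCommGroup M]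
    [Module ℤ_[p]⟦X⟧ M] [Module.Finite ℤ_[p]⟦X⟧ M] {F : ℤ_[p]⟦X⟧} (hF0 : F ≠ 0)
    (hF : ∀ m : M, F • m = 0) {N : ℕ} (hN : F.order.toNat ≤ N) :
    Finite (M ⧸ (ker (lsmul ℤ_[p]⟦X⟧ M X ^ N) ⊔ range (lsmul ℤ_[p]⟦X⟧ M X))) := by
  set P := ker (lsmul ℤ_[p]⟦X⟧ M X ^ N) ⊔ range (lsmul ℤ_[p]⟦X⟧ M X)
  have hX : ∀ q : M ⧸ P, (X : ℤ_[p]⟦X⟧) • q = 0 := by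
    intro q
    obtain ⟨m, rfl⟩ := P.mkQ_surjective q
    rw [Submodule.mkQ_apply, ← Submodule.Quotient.mk_smul, Submodule.Quotient.mk_eq_zero]
    exact Submodule.mem_sup_right ⟨m, rfl⟩
  have hG : ∀ q : M ⧸ P, divXPowOrder F • q = 0 := by
    intro q
    obtain ⟨m, rfl⟩ := P.mkQ_surjective q
    rw [Submodule.mkQ_apply, ← Submodule.Quotient.mk_smul, Submodule.Quotient.mk_eq_zero]
    refine Submodule.mem_sup_left ?_
    rw [mem_ker, lsmul_pow, lsmul_apply, smul_smul,
      ← pow_sub_mul_pow X hN, mul_assoc, X_pow_order_mul_divXPowOrder, mul_smul, hF, smul_zero]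
  refine finite_of_X_smul_eq_zero (c := constantCoeff (divXPowOrder F)) ?_ hX fun q ↦ ?_
  · rwa [Ne, constantCoeff_divXPowOrder_eq_zero_iff]
  · rw [← smul_eq_C_constantCoeff_smul (hX q), hG]

end Iwasawa

/-- For a finitely generated torsion module `M` over the Iwasawa algebra
`Λ = ℤ_[p]⟦T⟧`, the coinvariants `M/TM` are finite if and only if the invariants
`M[T]` are finite. -/
theorem stmt_10 (p : ℕ) [Fact p.Prime] (M : Type*) [AddCommGroup M]
    [Module (PowerSeries ℤ_[p]) M] [Module.Finite (PowerSeries ℤ_[p]) M]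
    (htor : Module.IsTorsion (PowerSeries ℤ_[p]) M) :
    Finite (M ⧸ LinearMap.range
        ((LinearMap.lsmul (PowerSeries ℤ_[p]) M) (PowerSeries.X))) ↔
      Finite (LinearMap.ker
        ((LinearMap.lsmul (PowerSeries ℤ_[p]) M) (PowerSeries.X))) := by
  set φ : Module.End ℤ_[p]⟦X⟧ M := lsmul ℤ_[p]⟦X⟧ M X
  obtain ⟨F, hFann, hFreg⟩ := Submodule.annihilator_top_inter_nonZeroDivisors htor
  obtain ⟨N, hnN, h1N, hdisj⟩ : ∃ N, F.order.toNat ≤ N ∧ 1 ≤ N ∧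
      Disjoint (ker (φ ^ N)) (range (φ ^ N)) :=
    ((Filter.eventually_ge_atTop _).and ((Filter.eventually_ge_atTop 1).and
      φ.eventually_disjoint_ker_pow_range_pow)).exists
  constructor
  · intro
    have := φ.finite_coker_pow N
    have := Submodule.finite_of_disjoint hdisj
    have hle : ker φ ≤ ker (φ ^ N) := by simpa using φ.iterateKer.monotone h1N
    exact .of_injective _ (Submodule.inclusion_injective hle)
  · intro
    have := φ.finite_ker_pow N
    have := finite_quotient_ker_X_pow_sup_range_X (nonZeroDivisors.ne_zero hFreg)
      (fun m ↦ Submodule.mem_annihilator.mp hFann m Submodule.mem_top) hnN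
    exact Submodule.finite_quotient_of_finite_quotient_sup (S := ker (φ ^ N))
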